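/- arXiv:2505.05273 — 3 statements merged into one kernel-verified Lean document; each statement's English description precedes it below -/
import Mathlib

section
/- Let L ≥ 1, let p be a probability vector on Fin L, let ℓ : Fin L → ℝ, and let λ > 0. Let Z > 0 and Z_j > 0 be real numbers, and define α = (1/Z) · exp(−(Σ_y p y · ℓ y)/λ) and α_j = (1/Z_j) · Σ_y p y · exp(−ℓ y / λ). Then: (i) Z · α ≤ Z_j · α_j; and (ii) if moreover Z ≤ Z_j, then for every τ ≥ 0, with τ' = (Z / Z_j) · τ, the indicator 𝟙[α_j ≤ τ'] ≤ 𝟙[α ≤ τ]. That is, whenever the joint ideal density ratio rejector rejects at threshold τ', the marginal ideal density ratio rejector rejects at threshold τ. -/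
/-! Jensen's inequality for the convex function `exp` gives `exp (E[-ℓ/λ]) ≤ E[exp (-ℓ/λ)]`,
i.e. `Z·α ≤ Z_j·α_j`. Hence `α_j ≤ (Z/Z_j)·τ` forces `Z·α ≤ Z_j·α_j ≤ Z·τ`, so `α ≤ τ`. -/

open Finset

theorem Real.exp_sum_mul_le_sum_mul_exp {ι : Type*} (s : Finset ι) {w : ι → ℝ}
    (hw_nonneg : ∀ i ∈ s, 0 ≤ w i) (hw_sum : ∑ i ∈ s, w i = 1) (x : ι → ℝ) :
    Real.exp (∑ i ∈ s, w i * x i) ≤ ∑ i ∈ s, w i * Real.exp (x i) :=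
  convexOn_exp.map_sum_le hw_nonneg hw_sum fun i _ => Set.mem_univ (x i)

theorem Real.exp_neg_sum_mul_div_le {ι : Type*} [Fintype ι] {p : ι → ℝ}
    (hp_nonneg : ∀ i, 0 ≤ p i) (hp_sum : ∑ i, p i = 1) (ℓ : ι → ℝ) (lam : ℝ) :
    Real.exp (-(∑ i, p i * ℓ i) / lam) ≤ ∑ i, p i * Real.exp (-(ℓ i) / lam) := by
  have h_linear : -(∑ i, p i * ℓ i) / lam = ∑ i, p i * (-(ℓ i) / lam) := by
    rw [neg_div, sum_div, ← sum_neg_distrib]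
    exact sum_congr rfl fun i _ => by ring
  rw [h_linear]
  exact Real.exp_sum_mul_le_sum_mul_exp univ (fun i _ => hp_nonneg i) hp_sum _

theorem ite_one_zero_le_ite_one_zero_of_imp {P Q : Prop} [Decidable P] [Decidable Q] (h : P → Q) :
    (if P then (1 : ℝ) else 0) ≤ if Q then 1 else 0 := by
  split_ifs with hP hQ
  · exact le_rfl
  · exact absurd (h hP) hQ
  · exact zero_le_one
  · exact le_rfl

theorem le_of_mul_le_mul_of_le_div_mul {Z Zj α αj τ : ℝ} (hZ : 0 < Z) (hZj : 0 < Zj)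
    (h_scaled : Z * α ≤ Zj * αj) (hαj : αj ≤ (Z / Zj) * τ) : α ≤ τ := by
  have h_bound : Zj * αj ≤ Z * τ :=
    calc Zj * αj ≤ Zj * ((Z / Zj) * τ) := mul_le_mul_of_nonneg_left hαj hZj.le
      _ = Z * τ := by field_simp
  exact le_of_mul_le_mul_left (h_scaled.trans h_bound) hZ

theorem marginal_vs_joint_ratio_rejectors_general (L : ℕ)
    (p : Fin L → ℝ) (hp_nonneg : ∀ y, 0 ≤ p y) (hp_sum : ∑ y, p y = 1)
    (ℓ : Fin L → ℝ) (lam : ℝ)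
    (Z Zj : ℝ) (hZ : 0 < Z) (hZj : 0 < Zj)
    (α αj : ℝ)
    (hα : α = (1 / Z) * Real.exp (-(∑ y, p y * ℓ y) / lam))
    (hαj : αj = (1 / Zj) * ∑ y, p y * Real.exp (-(ℓ y) / lam)) :
    Z * α ≤ Zj * αj ∧
      (Z ≤ Zj → ∀ τ : ℝ, 0 ≤ τ →
        (if αj ≤ (Z / Zj) * τ then (1 : ℝ) else 0) ≤ (if α ≤ τ then (1 : ℝ) else 0)) := by
  have h_scaled : Z * α ≤ Zj * αj := by
    rw [hα, hαj, ← mul_assoc, ← mul_assoc, mul_one_div_cancel hZ.ne',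
      mul_one_div_cancel hZj.ne', one_mul, one_mul]
    exact Real.exp_neg_sum_mul_div_le hp_nonneg hp_sum ℓ lam
  exact ⟨h_scaled, fun _ τ _ => ite_one_zero_le_ite_one_zero_of_imp
    (le_of_mul_le_mul_of_le_div_mul hZ hZj h_scaled)⟩

/-- **Relation between marginal and joint ideal density ratios (Lemma 3.1, pointwise).**
For a probability vector `p` on `Fin L`, a loss `ℓ`, `λ > 0` and normalization constants
`Z, Z_j > 0`, the marginal ratio `α = (1/Z)·exp(-(Σ_y p_y ℓ_y)/λ)` and joint ratio
`α_j = (1/Z_j)·Σ_y p_y exp(-ℓ_y/λ)` satisfy `Z·α ≤ Z_j·α_j`; and if `Z ≤ Z_j`, then for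
every `τ ≥ 0`, with `τ' = (Z/Z_j)·τ`, we have `𝟙[α_j ≤ τ'] ≤ 𝟙[α ≤ τ]`. -/
theorem marginal_vs_joint_ratio_rejectors (L : ℕ) (hL : 1 ≤ L)
    (p : Fin L → ℝ) (hp_nonneg : ∀ y, 0 ≤ p y) (hp_sum : ∑ y, p y = 1)
    (ℓ : Fin L → ℝ) (lam : ℝ) (hlam : 0 < lam)
    (Z Zj : ℝ) (hZ : 0 < Z) (hZj : 0 < Zj)
    (α αj : ℝ)
    (hα : α = (1 / Z) * Real.exp (-(∑ y, p y * ℓ y) / lam))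
    (hαj : αj = (1 / Zj) * ∑ y, p y * Real.exp (-(ℓ y) / lam)) :
    Z * α ≤ Zj * αj ∧
      (Z ≤ Zj → ∀ τ : ℝ, 0 ≤ τ →
        (if αj ≤ (Z / Zj) * τ then (1 : ℝ) else 0) ≤ (if α ≤ τ then (1 : ℝ) else 0)) :=
  marginal_vs_joint_ratio_rejectors_general L p hp_nonneg hp_sum ℓ lam Z Zj hZ hZj α αj hα hαj
end

section
/- Let L ≥ 1 and let p, q be probability vectors on Fin L with p y > 0 and q y > 0 for all y, let λ > 1 and κ ∈ ℝ. Then 𝟙[−log(Σ_{y ∈ Fin L} (p y)^{1 − 1/λ} (q y)^{1/λ}) ≥ κ] ≤ 𝟙[Σ_{y ∈ Fin L} p y · log(p y / q y) ≥ λ · κ]. That is, whenever the Bhattacharyya-divergence rejector rejects at threshold κ, the KL-divergence rejector rejects at threshold λ·κ; Bhattacharyya-based rejection is less aggressive than Chow's Rule. -/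
/-!
Writing `p ^ (1 - α) * q ^ α = p * (q / p) ^ α`, the Bhattacharyya sum is the `p`-average of
`(q / p) ^ α`, and Jensen's inequality for the concave `log` bounds its logarithm from below by
the `p`-average of `α * log (q / p)`, which is `-α · KL(p ‖ q)`. Hence
`B_α(p ‖ q) ≤ α · KL(p ‖ q)`, and with `α = 1 / λ` the Bhattacharyya rejector at `κ` can only fire
when `KL(p ‖ q) ≥ λ κ`.
-/

open Real

lemma Real.sum_mul_log_le_log_sum_mul {ι : Type*} {s : Finset ι} {w x : ι → ℝ}
    (hw : ∀ i ∈ s, 0 ≤ w i) (hw_sum : ∑ i ∈ s, w i = 1) (hx : ∀ i ∈ s, 0 < x i) :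
    ∑ i ∈ s, w i * log (x i) ≤ log (∑ i ∈ s, w i * x i) := by
  simpa only [smul_eq_mul] using strictConcaveOn_log_Ioi.concaveOn.le_map_sum hw hw_sum hx

lemma Real.rpow_one_sub_mul_rpow {p q : ℝ} (hp : 0 < p) (hq : 0 ≤ q) (α : ℝ) :
    p ^ (1 - α) * q ^ α = p * (q / p) ^ α := by
  rw [div_rpow hq hp.le, rpow_sub hp, rpow_one]
  field_simp

lemma neg_log_sum_rpow_mul_rpow_le_mul_sum_mul_log_div {ι : Type*} [Fintype ι] {p q : ι → ℝ}
    (hp : ∀ i, 0 < p i) (hq : ∀ i, 0 < q i) (hp_sum : ∑ i, p i = 1) (α : ℝ) :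
    -log (∑ i, p i ^ (1 - α) * q i ^ α) ≤ α * ∑ i, p i * log (p i / q i) := by
  have jensen := sum_mul_log_le_log_sum_mul (s := Finset.univ) (fun i _ => (hp i).le) hp_sum
    (fun i _ => rpow_pos_of_pos (div_pos (hq i) (hp i)) α)
  have average_log : ∑ i, p i * log ((q i / p i) ^ α) = -(α * ∑ i, p i * log (p i / q i)) := by
    rw [Finset.mul_sum, ← Finset.sum_neg_distrib]
    refine Finset.sum_congr rfl fun i _ => ?_
    rw [log_rpow (div_pos (hq i) (hp i)), log_div (hq i).ne' (hp i).ne',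
      log_div (hp i).ne' (hq i).ne']
    ring
  simp only [rpow_one_sub_mul_rpow (hp _) (hq _).le]
  linarith

theorem bhattacharyya_rejector_le_kl_rejector_general (L : ℕ)
    (p q : Fin L → ℝ) (hp_pos : ∀ y, 0 < p y) (hq_pos : ∀ y, 0 < q y)
    (hp_sum : ∑ y, p y = 1)
    (lam κ : ℝ) (hlam : 1 < lam) :
    (if -Real.log (∑ y, (p y) ^ (1 - 1 / lam) * (q y) ^ (1 / lam)) ≥ κ then (1 : ℝ) else 0)
      ≤ (if (∑ y, p y * Real.log (p y / q y)) ≥ lam * κ then (1 : ℝ) else 0) := by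
  have hlam_pos : 0 < lam := zero_lt_one.trans hlam
  have bound := neg_log_sum_rpow_mul_rpow_le_mul_sum_mul_log_div hp_pos hq_pos hp_sum (1 / lam)
  by_cases hB : -log (∑ y, p y ^ (1 - 1 / lam) * q y ^ (1 / lam)) ≥ κ
  · have hKL : ∑ y, p y * log (p y / q y) ≥ lam * κ := by
      have := mul_le_mul_of_nonneg_left (hB.le.trans bound) hlam_pos.le
      rwa [← mul_assoc, mul_one_div_cancel hlam_pos.ne', one_mul] at this
    rw [if_pos hB, if_pos hKL]
  · rw [if_neg hB]
    split_ifs <;> norm_num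

/-- **Bhattacharyya rejection is less aggressive than KL rejection (Lemma 4.1,
second part).** For positive probability vectors `p, q` on `Fin L`, `λ > 1` and any
threshold `κ`, whenever the Bhattacharyya-divergence rejector rejects at level `κ`,
the KL-divergence rejector rejects at level `λ·κ`:
`𝟙[B_{1-1/λ}(p ‖ q) ≥ κ] ≤ 𝟙[KL(p ‖ q) ≥ λ·κ]`. -/
theorem bhattacharyya_rejector_le_kl_rejector (L : ℕ) (hL : 1 ≤ L)
    (p q : Fin L → ℝ) (hp_pos : ∀ y, 0 < p y) (hq_pos : ∀ y, 0 < q y)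
    (hp_sum : ∑ y, p y = 1) (hq_sum : ∑ y, q y = 1)
    (lam κ : ℝ) (hlam : 1 < lam) :
    (if -Real.log (∑ y, (p y) ^ (1 - 1 / lam) * (q y) ^ (1 / lam)) ≥ κ then (1 : ℝ) else 0)
      ≤ (if (∑ y, p y * Real.log (p y / q y)) ≥ lam * κ then (1 : ℝ) else 0) :=
  bhattacharyya_rejector_le_kl_rejector_general L p q hp_pos hq_pos hp_sum lam κ hlam
end

section
/- Let (X, 𝒜) be a measurable space, ḡ : X → ℝ any function, λ > 0, Z > 0, and c ≥ 0. Define the marginal ideal density ratio α(x) = (1/Z) · exp(−ḡ(x)/λ) and set τ = (1/Z) · exp(−c/λ). Then for every x ∈ X, 𝟙[α(x) ≤ τ] = 𝟙[ḡ(x) ≥ c]. Hence for every rejection cost c ≥ 0 there exists a threshold τ such that the marginal ideal density ratio rejector r^dr(·; τ) coincides with the optimal rejector of Chow's Rule r*(·; c). -/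
open Real

/-! The density ratio `α = (1/Z)·exp(-ḡ/λ)` is a strictly decreasing function of `ḡ`, so thresholding
`α` from above at the image `τ` of `c` is the same as thresholding `ḡ` from below at `c`. -/

lemma exp_neg_div_le_exp_neg_div_iff {a b lam : ℝ} (hlam : 0 < lam) :
    exp (-a / lam) ≤ exp (-b / lam) ↔ b ≤ a := by
  rw [exp_le_exp, div_le_div_iff_of_pos_right hlam, neg_le_neg_iff]

lemma one_div_mul_exp_neg_div_le_iff {a b lam Z : ℝ} (hlam : 0 < lam) (hZ : 0 < Z) :
    1 / Z * exp (-a / lam) ≤ 1 / Z * exp (-b / lam) ↔ b ≤ a := by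
  rw [mul_le_mul_iff_right₀ (one_div_pos.mpr hZ), exp_neg_div_le_exp_neg_div_iff hlam]

theorem density_ratio_rejector_eq_chow_general {X : Type*}
    (g : X → ℝ) (lam Z c : ℝ) (hlam : 0 < lam) (hZ : 0 < Z) :
    ∀ x : X,
      (if (1 / Z) * Real.exp (-(g x) / lam) ≤ (1 / Z) * Real.exp (-c / lam)
          then (1 : ℝ) else 0)
        = (if g x ≥ c then (1 : ℝ) else 0) :=
  fun _ => if_congr (one_div_mul_exp_neg_div_le_iff hlam hZ) rfl rfl

/-- **Density ratio rejection recovers Chow's Rule (Theorem 2.3).**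
For any conditional risk `ḡ : X → ℝ`, `λ > 0`, `Z > 0` and cost `c ≥ 0`, the marginal
ideal density ratio `α(x) = (1/Z)·exp(-ḡ(x)/λ)` thresholded at `τ = (1/Z)·exp(-c/λ)`
coincides pointwise with Chow's Rule: `𝟙[α(x) ≤ τ] = 𝟙[ḡ(x) ≥ c]`. -/
theorem density_ratio_rejector_eq_chow {X : Type*} [MeasurableSpace X]
    (g : X → ℝ) (lam Z c : ℝ) (hlam : 0 < lam) (hZ : 0 < Z) (hc : 0 ≤ c) :
    ∀ x : X,
      (if (1 / Z) * Real.exp (-(g x) / lam) ≤ (1 / Z) * Real.exp (-c / lam)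
          then (1 : ℝ) else 0)
        = (if g x ≥ c then (1 : ℝ) else 0) :=
  density_ratio_rejector_eq_chow_general g lam Z c hlam hZ
end
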